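/- Let f : ℝ₊ × X → X be a continuous semiflow on a Polish space X and f(t,p) a motion with precompact orbit whose minimal center of attraction C_p is generic but not a minimal subset of (X,f). Then there exists a residual subset S of C_p such that for every x ∈ S and every minimal subset Λ ⊂ C_p there is y ∈ Λ with: liminf_{t→∞} d(f(t,x), f(t,y)) = 0, limsup_{t→∞} d(f(t,x), f(t,y)) > 0, liminf_{t→∞} d(f(t,x), y) = 0, and limsup_{t→∞} d(f(t,x), y) ≥ (1/2) diam(C_p). -/

import Mathlib

/-! The minimal center of attraction of a motion with precompact orbit is the set of points near
which the motion spends a positive upper density of time. Applied to `p` and to the generic point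
`q`, this shows that `C` is compact and invariant and lies in the ω-limit set of `q`; a point whose
orbit keeps returning everywhere in `C` makes the points with ω-limit set `C` a dense `G_δ`.
For such an `x` and a minimal `Λ ⊊ C`, an idempotent of the Ellis semigroup of the flow on `C`
sending `x` into `Λ` produces `y ∈ Λ` proximal to `x`. As the orbit of `x` also accumulates at
every point of `C`, at points off `Λ` and at points far from `y`, the distances oscillate. -/

open MeasureTheory Filter Metric Set Topology
open scoped Classical

noncomputable section

/-- The set `S ⊆ ℝ` has density `α` in `[0,∞)`. -/
def HasDens (S : Set ℝ) (α : ℝ) : Prop :=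
  Filter.Tendsto (fun T : ℝ => (MeasureTheory.volume (S ∩ Set.Icc 0 T)).toReal / T)
    Filter.atTop (nhds α)

/-- `f` is a continuous semiflow on `X` (time in `[0,∞)`). -/
def IsSemiflow {X : Type*} [MetricSpace X] (f : ℝ → X → X) : Prop :=
  ContinuousOn (fun p : ℝ × X => f p.1 p.2) (Set.Ici 0 ×ˢ Set.univ) ∧
  (∀ x : X, f 0 x = x) ∧
  (∀ s t : ℝ, 0 ≤ s → 0 ≤ t → ∀ x : X, f s (f t x) = f (s + t) x)

/-- `C` is a center of attraction of the motion `f (t, x)`. -/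
def IsCtr {X : Type*} [MetricSpace X] (f : ℝ → X → X) (x : X) (C : Set X) : Prop :=
  IsClosed C ∧ ∀ ε > (0 : ℝ), HasDens {t : ℝ | 0 ≤ t ∧ f t x ∈ Metric.thickening ε C} 1

/-- `C` is the minimal center of attraction of the motion `f (t, x)`. -/
def IsMCA {X : Type*} [MetricSpace X] (f : ℝ → X → X) (x : X) (C : Set X) : Prop :=
  IsCtr f x C ∧ ∀ C' ⊆ C, IsCtr f x C' → C' = C

/-- `Λ` is invariant under the semiflow `f`. -/
def FlowInvariant {X : Type*} [MetricSpace X] (f : ℝ → X → X) (Λ : Set X) : Prop :=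
  ∀ t : ℝ, 0 ≤ t → ∀ z ∈ Λ, f t z ∈ Λ

/-- `Λ` is a minimal set of the semiflow `f`. -/
def IsMinimalSet {X : Type*} [MetricSpace X] (f : ℝ → X → X) (Λ : Set X) : Prop :=
  Λ.Nonempty ∧ IsClosed Λ ∧ FlowInvariant f Λ ∧
    ∀ Λ' ⊆ Λ, Λ'.Nonempty → IsClosed Λ' → FlowInvariant f Λ' → Λ' = Λ


open scoped NNReal

section Density

def occupation (A : Set ℝ) (T : ℝ) : ℝ := (volume (A ∩ Icc 0 T)).toReal

lemma hasDens_iff_occupation {A : Set ℝ} {α : ℝ} :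
    HasDens A α ↔ Tendsto (fun T => occupation A T / T) atTop (𝓝 α) := Iff.rfl

lemma volume_inter_Icc_ne_top (A : Set ℝ) (T : ℝ) : volume (A ∩ Icc 0 T) ≠ ⊤ :=
  ((measure_mono inter_subset_right).trans_lt measure_Icc_lt_top).ne

lemma occupation_nonneg (A : Set ℝ) (T : ℝ) : 0 ≤ occupation A T := ENNReal.toReal_nonneg

lemma occupation_mono {A B : Set ℝ} (h : A ⊆ B) (T : ℝ) : occupation A T ≤ occupation B T :=
  ENNReal.toReal_mono (volume_inter_Icc_ne_top B T) (measure_mono (inter_subset_inter_left _ h))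

lemma occupation_union_le (A B : Set ℝ) (T : ℝ) :
    occupation (A ∪ B) T ≤ occupation A T + occupation B T := by
  rw [occupation, union_inter_distrib_right]
  exact ENNReal.toReal_le_add (measure_union_le _ _) (volume_inter_Icc_ne_top A T)
    (volume_inter_Icc_ne_top B T)

lemma occupation_le_of_subset_Iic {A : Set ℝ} {n : ℝ} (h : A ⊆ Iic n) (T : ℝ) :
    occupation A T ≤ max n 0 := by
  have hsub : A ∩ Icc 0 T ⊆ Icc 0 n := fun t ht => ⟨ht.2.1, h ht.1⟩
  calc occupation A T ≤ (volume (Icc (0 : ℝ) n)).toReal :=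
        ENNReal.toReal_mono measure_Icc_lt_top.ne (measure_mono hsub)
    _ = max n 0 := by rw [Real.volume_Icc, sub_zero, ENNReal.toReal_ofReal']

lemma occupation_preimage_add_le (A : Set ℝ) {s : ℝ} (hs : 0 ≤ s) (T : ℝ) :
    occupation ((· + s) ⁻¹' A) T ≤ occupation A (T + s) := by
  have hsub : (· + s) ⁻¹' A ∩ Icc 0 T ⊆ (· + s) ⁻¹' (A ∩ Icc 0 (T + s)) :=
    fun t ⟨hA, h0, hT⟩ => ⟨hA, by simp only; linarith, by simp only; linarith⟩
  calc occupation ((· + s) ⁻¹' A) T ≤ (volume ((· + s) ⁻¹' (A ∩ Icc 0 (T + s)))).toReal := by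
        refine ENNReal.toReal_mono ?_ (measure_mono hsub)
        rw [measure_preimage_add_right]
        exact volume_inter_Icc_ne_top A _
    _ = occupation A (T + s) := by rw [measure_preimage_add_right, occupation]

lemma occupation_add_occupation_diff {A : Set ℝ} (hA : MeasurableSet A) {T : ℝ} (hT : 0 ≤ T) :
    occupation A T + occupation (Ici 0 \ A) T = T := by
  have hdiff : (Ici 0 \ A) ∩ Icc 0 T = Icc 0 T \ A := by
    ext t; simp only [mem_inter_iff, Set.mem_sdiff, mem_Ici, mem_Icc]; tauto
  have hfin : volume (Icc 0 T ∩ A) ≠ ⊤ :=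
    ((measure_mono inter_subset_left).trans_lt measure_Icc_lt_top).ne
  have hfin' : volume (Icc 0 T \ A) ≠ ⊤ :=
    ((measure_mono sdiff_subset).trans_lt measure_Icc_lt_top).ne
  rw [occupation, occupation, hdiff, inter_comm A, ← ENNReal.toReal_add hfin hfin',
    measure_inter_add_sdiff _ hA, Real.volume_Icc, sub_zero, ENNReal.toReal_ofReal hT]

lemma hasDens_zero_of_occupation_le {A : Set ℝ} {g : ℝ → ℝ} (hg : Tendsto g atTop (𝓝 0))
    (h : ∀ᶠ T in atTop, occupation A T ≤ g T * T) : HasDens A 0 := by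
  refine squeeze_zero' ?_ ?_ hg
  · filter_upwards [eventually_ge_atTop 0] with T hT using div_nonneg (occupation_nonneg A T) hT
  · filter_upwards [h, eventually_gt_atTop 0] with T hT hT0 using (div_le_iff₀ hT0).2 hT

lemma HasDens.zero_mono {A B : Set ℝ} (hB : HasDens B 0) (h : A ⊆ B) : HasDens A 0 := by
  refine hasDens_zero_of_occupation_le hB ?_
  filter_upwards [eventually_gt_atTop 0] with T hT
  rw [div_mul_cancel₀ _ hT.ne']
  exact occupation_mono h T

lemma HasDens.zero_union {A B : Set ℝ} (hA : HasDens A 0) (hB : HasDens B 0) :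
    HasDens (A ∪ B) 0 := by
  refine hasDens_zero_of_occupation_le (by simpa using hA.add hB) ?_
  filter_upwards [eventually_gt_atTop 0] with T hT
  rw [add_mul, div_mul_cancel₀ _ hT.ne', div_mul_cancel₀ _ hT.ne']
  exact occupation_union_le A B T

lemma hasDens_zero_of_subset_Iic {A : Set ℝ} {n : ℝ} (h : A ⊆ Iic n) : HasDens A 0 := by
  refine hasDens_zero_of_occupation_le
    ((tendsto_const_nhds (x := max n 0)).div_atTop tendsto_id) ?_
  filter_upwards [eventually_gt_atTop 0] with T hT
  rw [id, div_mul_cancel₀ _ hT.ne']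
  exact occupation_le_of_subset_Iic h T

lemma HasDens.zero_preimage_add {A : Set ℝ} (hA : HasDens A 0) {s : ℝ} (hs : 0 ≤ s) :
    HasDens ((· + s) ⁻¹' A) 0 := by
  have hlim : Tendsto (fun T => occupation A (T + s) / (T + s) * (1 + s / T)) atTop (𝓝 0) := by
    simpa using ((hasDens_iff_occupation.1 hA).comp
      (tendsto_atTop_add_const_right _ s tendsto_id)).mul
        (tendsto_const_nhds.add (tendsto_const_nhds.div_atTop tendsto_id))
  refine hasDens_zero_of_occupation_le hlim ?_
  filter_upwards [eventually_gt_atTop 0] with T hT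
  have hTs : T + s ≠ 0 := by positivity
  rw [mul_assoc, add_mul, div_mul_cancel₀ _ hT.ne', one_mul, div_mul_cancel₀ _ hTs]
  exact occupation_preimage_add_le A hs T

lemma hasDens_one_iff {A : Set ℝ} (hA : MeasurableSet A) :
    HasDens A 1 ↔ HasDens (Ici 0 \ A) 0 := by
  have hcompl : (fun T => occupation (Ici 0 \ A) T / T) =ᶠ[atTop]
      fun T => 1 - occupation A T / T := by
    filter_upwards [eventually_gt_atTop 0] with T hT
    rw [eq_sub_iff_add_eq, ← add_div, add_comm, occupation_add_occupation_diff hA hT.le,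
      div_self hT.ne']
  rw [hasDens_iff_occupation, hasDens_iff_occupation, tendsto_congr' hcompl]
  exact ⟨fun h => by simpa using h.const_sub 1, fun h => by simpa using h.const_sub 1⟩

end Density

section DensitySupport

variable {X : Type*} {f : ℝ → X → X}

def visits (f : ℝ → X → X) (y : X) (U : Set X) : Set ℝ := {t | 0 ≤ t ∧ f t y ∈ U}

lemma visits_mono (f : ℝ → X → X) (y : X) {U V : Set X} (h : U ⊆ V) :
    visits f y U ⊆ visits f y V :=
  fun _ ⟨ht, hU⟩ => ⟨ht, h hU⟩

lemma visits_union (f : ℝ → X → X) (y : X) (U V : Set X) :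
    visits f y (U ∪ V) = visits f y U ∪ visits f y V := by
  ext t; simp only [visits, mem_ofPred_eq, mem_union, and_or_left]

variable [MetricSpace X]

lemma IsSemiflow.continuous_map (hf : IsSemiflow f) {t : ℝ} (ht : 0 ≤ t) : Continuous (f t) :=
  hf.1.comp_continuous (continuous_const.prodMk continuous_id) fun _ => ⟨ht, mem_univ _⟩

lemma IsSemiflow.continuousOn_motion (hf : IsSemiflow f) (y : X) :
    ContinuousOn (fun t => f t y) (Ici 0) :=
  hf.1.comp (continuousOn_id.prodMk continuousOn_const) fun _ ht => ⟨ht, mem_univ _⟩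

lemma measurableSet_visits (hf : IsSemiflow f) (y : X) {U : Set X} (hU : IsOpen U) :
    MeasurableSet (visits f y U) := by
  obtain ⟨V, hV, hVU⟩ := _root_.continuousOn_iff'.1 (hf.continuousOn_motion y) U hU
  have : visits f y U = V ∩ Ici 0 := by rw [← hVU]; ext t; exact and_comm
  rw [this]
  exact hV.measurableSet.inter measurableSet_Ici

/-- The points near which the motion of `y` spends a positive upper density of time. -/
def densitySupport (f : ℝ → X → X) (y : X) : Set X :=
  {x | ∀ U ∈ 𝓝 x, ¬ HasDens (visits f y U) 0}

lemma isClosed_densitySupport (f : ℝ → X → X) (y : X) : IsClosed (densitySupport f y) := by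
  refine isOpen_compl_iff.1 (isOpen_iff_mem_nhds.2 fun x hx => ?_)
  simp only [densitySupport, mem_compl_iff, mem_ofPred_eq, not_forall, not_not] at hx
  obtain ⟨U, hU, hnull⟩ := hx
  filter_upwards [eventually_mem_nhds_iff.2 hU] with x' hx' hD using hD U hx' hnull

lemma densitySupport_subset_of_isCtr (hf : IsSemiflow f) {y : X} {C : Set X} (hC : IsCtr f y C) :
    densitySupport f y ⊆ C := by
  intro x hx
  by_contra hxC
  obtain ⟨ε, hε, hball⟩ := Metric.isOpen_iff.1 hC.1.isOpen_compl x hxC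
  refine hx (ball x (ε / 2)) (ball_mem_nhds x (half_pos hε)) ?_
  refine ((hasDens_one_iff (measurableSet_visits hf y isOpen_thickening)).1
    (hC.2 (ε / 2) (half_pos hε))).zero_mono fun t ⟨ht, hxt⟩ => ⟨ht, fun ⟨_, hth⟩ => ?_⟩
  obtain ⟨c, hc, hct⟩ := mem_thickening_iff.1 hth
  refine hball (mem_ball.2 ?_) hc
  linarith [dist_triangle c (f t y) x, dist_comm c (f t y), mem_ball.1 hxt]

lemma isCtr_densitySupport (hf : IsSemiflow f) {y : X}
    (hy : IsCompact (closure ((fun t => f t y) '' Ici 0))) :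
    IsCtr f y (densitySupport f y) := by
  refine ⟨isClosed_densitySupport f y, fun ε hε => ?_⟩
  set K := closure ((fun t => f t y) '' Ici 0) \ thickening ε (densitySupport f y)
  have hK : HasDens (visits f y K) 0 := by
    refine (hy.diff isOpen_thickening).induction_on (p := fun s => HasDens (visits f y s) 0)
      (hasDens_zero_of_subset_Iic (n := 0) fun t ⟨_, ht⟩ => ht.elim)
      (fun s s' hss' hs' => hs'.zero_mono (visits_mono f y hss'))
      (fun s s' hs hs' => visits_union f y s s' ▸ hs.zero_union hs') fun x hx => ?_
    have hxD : x ∉ densitySupport f y := fun hxD => hx.2 (self_subset_thickening hε _ hxD)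
    simp only [densitySupport, mem_ofPred_eq, not_forall, not_not] at hxD
    obtain ⟨U, hU, hnull⟩ := hxD
    exact ⟨U, mem_nhdsWithin_of_mem_nhds hU, hnull⟩
  refine (hasDens_one_iff (measurableSet_visits hf y isOpen_thickening)).2 (hK.zero_mono ?_)
  rintro t ⟨ht, hth⟩
  exact ⟨ht, subset_closure ⟨t, ht, rfl⟩, fun h => hth ⟨ht, h⟩⟩

lemma densitySupport_eq_of_isMCA (hf : IsSemiflow f) {y : X}
    (hy : IsCompact (closure ((fun t => f t y) '' Ici 0))) {C : Set X} (hC : IsMCA f y C) :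
    densitySupport f y = C :=
  hC.2 _ (densitySupport_subset_of_isCtr hf hC.1) (isCtr_densitySupport hf hy)

lemma flowInvariant_densitySupport (hf : IsSemiflow f) (y : X) :
    FlowInvariant f (densitySupport f y) := by
  intro s hs x hx U hU hnull
  refine hx _ ((hf.continuous_map hs).continuousAt.preimage_mem_nhds hU)
    ((hnull.zero_preimage_add hs).zero_mono fun t ⟨ht, htU⟩ => ⟨add_nonneg ht hs, ?_⟩)
  show f (t + s) y ∈ U
  rwa [add_comm, ← hf.2.2 s t hs ht]

lemma mapClusterPt_of_mem_densitySupport {y x : X} (hx : x ∈ densitySupport f y) :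
    MapClusterPt x atTop fun t => f t y := by
  refine mapClusterPt_iff_frequently.2 fun U hU => ?_
  by_contra h
  obtain ⟨n, hn⟩ := eventually_atTop.1 (not_frequently.1 h)
  exact hx U hU (hasDens_zero_of_subset_Iic fun t ⟨_, ht⟩ => not_lt.1 fun hnt => hn t hnt.le ht)

lemma IsMCA.isCompact (hf : IsSemiflow f) {y : X}
    (hy : IsCompact (closure ((fun t => f t y) '' Ici 0))) {C : Set X} (hC : IsMCA f y C) :
    IsCompact C := by
  refine hy.of_isClosed_subset hC.1.1 fun z hz => ?_
  rw [← densitySupport_eq_of_isMCA hf hy hC] at hz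
  exact mapClusterPt_atTop_iff_forall_mem_closure.1 (mapClusterPt_of_mem_densitySupport hz) 0

lemma IsMCA.flowInvariant (hf : IsSemiflow f) {y : X}
    (hy : IsCompact (closure ((fun t => f t y) '' Ici 0))) {C : Set X} (hC : IsMCA f y C) :
    FlowInvariant f C :=
  densitySupport_eq_of_isMCA hf hy hC ▸ flowInvariant_densitySupport hf y

lemma IsMCA.mapClusterPt (hf : IsSemiflow f) {y : X}
    (hy : IsCompact (closure ((fun t => f t y) '' Ici 0))) {C : Set X} (hC : IsMCA f y C)
    {z : X} (hz : z ∈ C) : MapClusterPt z atTop fun t => f t y :=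
  mapClusterPt_of_mem_densitySupport (densitySupport_eq_of_isMCA hf hy hC ▸ hz)

end DensitySupport

section EllisSemigroup

variable {Y : Type*} [TopologicalSpace Y] {g : ℝ≥0 → Y → Y}

lemma exists_idempotent_comp_of_isCompact [T2Space Y] {S : Set (Y → Y)} (hne : S.Nonempty)
    (hS : IsCompact S) (hcomp : ∀ h ∈ S, ∀ k ∈ S, h ∘ k ∈ S) : ∃ v ∈ S, v ∘ v = v :=
  letI : Semigroup (Y → Y) := (inferInstance : Monoid (Function.End Y)).toSemigroup
  exists_idempotent_in_compact_subsemigroup (fun k => continuous_pi fun y => continuous_apply (k y))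
    S hne hS hcomp

lemma comp_mem_closure_image_Ici (hg : ∀ t, Continuous (g t))
    (hadd : ∀ s t, g (s + t) = g s ∘ g t) {a : ℝ≥0} {h k : Y → Y}
    (hh : h ∈ closure (g '' Ici a)) (hk : k ∈ closure (range g)) :
    h ∘ k ∈ closure (g '' Ici a) := by
  have hgk : ∀ s ≥ a, g s ∘ k ∈ closure (g '' Ici a) := fun s hs =>
    map_mem_closure (continuous_pi fun y => (hg s).comp (continuous_apply y)) hk
      (by rintro _ ⟨t, rfl⟩; exact ⟨s + t, le_add_right hs, hadd s t⟩)
  rw [← closure_closure (s := g '' Ici a)]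
  exact map_mem_closure (f := (· ∘ k)) (continuous_pi fun y => continuous_apply (k y)) hh
    (by rintro _ ⟨s, hs, rfl⟩; exact hgk s hs)

lemma mapsTo_of_mem_closure_range {Λ : Set Y} (hΛ : IsClosed Λ) (hinv : ∀ t, MapsTo (g t) Λ Λ)
    {h : Y → Y} (hh : h ∈ closure (range g)) : MapsTo h Λ Λ := fun z hz =>
  closure_minimal (t := {h : Y → Y | h z ∈ Λ}) (by rintro _ ⟨t, rfl⟩; exact hinv t hz)
    (hΛ.preimage (continuous_apply z)) hh

lemma exists_mem_closure_range_apply_eq [CompactSpace Y] [T2Space Y] {x z : Y}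
    (hz : z ∈ closure (range fun t => g t x)) : ∃ h ∈ closure (range g), h x = z := by
  have hK : IsCompact ((fun h : Y → Y => h x) '' closure (range g)) :=
    isClosed_closure.isCompact.image (continuous_apply x)
  refine closure_minimal ?_ hK.isClosed hz
  rintro _ ⟨t, rfl⟩
  exact ⟨g t, subset_closure ⟨t, rfl⟩, rfl⟩

/-- Auslander's argument: an idempotent `v` of the semigroup `Ω` of limits of `g t` as `t → ∞`
with `v x ∈ Λ` makes `x` and `y := v x` proximal, since `v x = v y = y`. -/
theorem exists_proximal_mem [CompactSpace Y] [T2Space Y] (hg : ∀ t, Continuous (g t))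
    (hadd : ∀ s t, g (s + t) = g s ∘ g t) {Λ : Set Y} (hΛ : IsClosed Λ)
    (hinv : ∀ t, MapsTo (g t) Λ Λ) {x : Y} (hx : (Λ ∩ closure (range fun t => g t x)).Nonempty) :
    ∃ y ∈ Λ, MapClusterPt (y, y) atTop fun t => (g t x, g t y) := by
  set Ω := {h : Y → Y | MapClusterPt h atTop g}
  have hΩ : ∀ h ∈ Ω, ∀ a, h ∈ closure (g '' Ici a) :=
    fun h hh => mapClusterPt_atTop_iff_forall_mem_closure.1 hh
  have hΩE : Ω ⊆ closure (range g) := fun h hh => by simpa using hΩ h hh 0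
  have hcomp : ∀ h ∈ Ω, ∀ k ∈ closure (range g), h ∘ k ∈ Ω := fun h hh k hk =>
    mapClusterPt_atTop_iff_forall_mem_closure.2 fun a =>
      comp_mem_closure_image_Ici hg hadd (hΩ h hh a) hk
  obtain ⟨w, hw⟩ : Ω.Nonempty := exists_clusterPt_of_compactSpace (map g atTop)
  obtain ⟨_, hzΛ, hz⟩ := hx
  obtain ⟨h, hh, rfl⟩ := exists_mem_closure_range_apply_eq hz
  have hL : IsClosed {k ∈ Ω | k x ∈ Λ} :=
    isClosed_setOfPred_clusterPt.inter (hΛ.preimage (continuous_apply x))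
  obtain ⟨v, ⟨hvΩ, hvx⟩, hvv⟩ := exists_idempotent_comp_of_isCompact (S := {k ∈ Ω | k x ∈ Λ})
    ⟨w ∘ h, hcomp w hw h hh, mapsTo_of_mem_closure_range hΛ hinv (hΩE hw) hzΛ⟩ hL.isCompact
    fun k hk k' hk' => ⟨hcomp k hk.1 k' (hΩE hk'.1),
      mapsTo_of_mem_closure_range hΛ hinv (hΩE hk.1) hk'.2⟩
  refine ⟨v x, hvx, ?_⟩
  have hvy : v (v x) = v x := congrFun hvv x
  have := hvΩ.continuousAt_comp (f := fun k : Y → Y => (k x, k (v x)))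
    (by fun_prop : Continuous fun k : Y → Y => (k x, k (v x))).continuousAt
  rwa [hvy] at this

theorem residual_forall_mapClusterPt [SecondCountableTopology Y] (hg : ∀ t, Continuous (g t))
    (hadd : ∀ s t, g (s + t) = g s ∘ g t) {q : Y} (hq : ∀ z, MapClusterPt z atTop fun t => g t q) :
    {x | ∀ z, MapClusterPt z atTop fun t => g t x} ∈ residual Y := by
  obtain ⟨b, hbc, hbne, hb⟩ := TopologicalSpace.exists_countable_basis Y
  set G : Set Y → ℕ → Set Y := fun V n => ⋃ t ≥ (n : ℝ≥0), g t ⁻¹' V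
  have hGopen : ∀ V ∈ b, ∀ n, IsOpen (G V n) := fun V hV n =>
    isOpen_biUnion fun t _ => (hb.isOpen hV).preimage (hg t)
  have hGdense : ∀ V ∈ b, ∀ n, Dense (G V n) := by
    intro V hV n
    refine dense_iff_inter_open.2 fun O hO ⟨z, hz⟩ => ?_
    obtain ⟨s, hs⟩ := ((hq z).frequently (hO.mem_nhds hz)).exists
    obtain ⟨c, hc⟩ := nonempty_iff_ne_empty.2 fun h => hbne (h ▸ hV)
    obtain ⟨t, hst, ht⟩ :=
      frequently_atTop.1 ((hq c).frequently ((hb.isOpen hV).mem_nhds hc)) (s + n)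
    refine ⟨g s q, hs, mem_iUnion₂.2 ⟨t - s, le_tsub_of_add_le_left hst, ?_⟩⟩
    rwa [mem_preimage, ← Function.comp_apply (f := g (t - s)), ← hadd,
      tsub_add_cancel_of_le (le_self_add.trans hst)]
  refine mem_of_superset ((countable_bInter_mem hbc).2 fun V hV =>
    countable_iInter_mem.2 fun n => residual_of_dense_open (hGopen V hV n) (hGdense V hV n)) ?_
  intro x hx z
  refine hb.nhds_hasBasis.mapClusterPt_iff_frequently.2 fun V ⟨hV, hzV⟩ =>
    frequently_atTop.2 fun a => ?_
  obtain ⟨n, hn⟩ := exists_nat_ge a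
  obtain ⟨t, ht, htV⟩ := mem_iUnion₂.1 (mem_iInter.1 (mem_iInter₂.1 hx V hV) n)
  exact ⟨t, hn.trans ht, htV⟩

end EllisSemigroup

section RestrictedSemiflow

variable {X : Type*} [MetricSpace X] {f : ℝ → X → X} {C : Set X}

def semiflowOn (f : ℝ → X → X) (hC : FlowInvariant f C) (t : ℝ≥0) (x : C) : C :=
  ⟨f t x, hC t t.2 x x.2⟩

lemma continuous_semiflowOn (hf : IsSemiflow f) (hC : FlowInvariant f C) (t : ℝ≥0) :
    Continuous (semiflowOn f hC t) :=
  ((hf.continuous_map t.2).comp continuous_subtype_val).subtype_mk _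

lemma semiflowOn_add (hf : IsSemiflow f) (hC : FlowInvariant f C) (s t : ℝ≥0) :
    semiflowOn f hC (s + t) = semiflowOn f hC s ∘ semiflowOn f hC t :=
  funext fun x => Subtype.ext (hf.2.2 s t s.2 t.2 x).symm

lemma mapClusterPt_comp_toReal {Z : Type*} [TopologicalSpace Z] {z : Z} {u : ℝ → Z} :
    MapClusterPt z atTop (u ∘ NNReal.toReal) ↔ MapClusterPt z atTop u := by
  rw [mapClusterPt_comp, NNReal.map_coe_atTop]

lemma mapClusterPt_semiflowOn_iff (hC : FlowInvariant f C) {x z : C} :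
    MapClusterPt z atTop (fun t => semiflowOn f hC t x) ↔
      MapClusterPt (z : X) atTop fun t => f t x := by
  rw [← mapClusterPt_comp_toReal, mapClusterPt_def, ← IsInducing.subtypeVal.mapClusterPt_iff,
    MapClusterPt, map_map]
  rfl

lemma closure_motion_subset (hC : FlowInvariant f C) (hCc : IsClosed C) {q : X} (hq : q ∈ C) :
    closure ((fun t => f t q) '' Ici 0) ⊆ C :=
  closure_minimal (image_subset_iff.2 fun t ht => hC t ht q hq) hCc

theorem exists_proximal_semiflowOn (hf : IsSemiflow f) (hC : FlowInvariant f C)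
    [CompactSpace C] {Λ : Set X} (hΛ : IsClosed Λ) (hΛinv : FlowInvariant f Λ)
    {x : C} {l : C} (hl : (l : X) ∈ Λ) (hxl : MapClusterPt l atTop fun t => semiflowOn f hC t x) :
    ∃ y ∈ Λ, MapClusterPt (y, y) atTop fun t => (f t x, f t y) := by
  obtain ⟨⟨y, _⟩, hyΛ, hprox⟩ := exists_proximal_mem (continuous_semiflowOn hf hC)
    (semiflowOn_add hf hC) (Λ := Subtype.val ⁻¹' Λ) (hΛ.preimage continuous_subtype_val)
    (fun t z hz => hΛinv t t.2 z hz) (x := x) ⟨l, hl, closure_mono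
      (image_subset_range _ _) (mapClusterPt_atTop_iff_forall_mem_closure.1 hxl 0)⟩
  exact ⟨y, hyΛ, mapClusterPt_comp_toReal.1 (hprox.continuousAt_comp
    (f := Prod.map Subtype.val Subtype.val)
    (by fun_prop : Continuous (Prod.map Subtype.val Subtype.val)).continuousAt)⟩

end RestrictedSemiflow

section Oscillation

variable {X α : Type*} [MetricSpace X] {l : Filter α} {u v : α → X}

lemma isBoundedUnder_dist_of_eventually_mem {C : Set X} (hC : Bornology.IsBounded C)
    (hu : ∀ᶠ a in l, u a ∈ C) (hv : ∀ᶠ a in l, v a ∈ C) :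
    IsBoundedUnder (· ≤ ·) l fun a => dist (u a) (v a) :=
  isBoundedUnder_of_eventually_le ((hu.and hv).mono fun _ h => dist_le_diam_of_mem hC h.1 h.2)

lemma liminf_dist_eq_zero_of_mapClusterPt [l.NeBot] {y : X}
    (hb : IsBoundedUnder (· ≤ ·) l fun a => dist (u a) (v a))
    (h : MapClusterPt (y, y) l fun a => (u a, v a)) :
    liminf (fun a => dist (u a) (v a)) l = 0 := by
  have h0 := h.continuousAt_comp (f := fun p : X × X => dist p.1 p.2) continuous_dist.continuousAt
  rw [dist_self] at h0
  exact le_antisymm (h0.liminf_le (isBoundedUnder_of ⟨0, fun _ => dist_nonneg⟩))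
    (le_liminf_of_le hb.isCoboundedUnder_ge (Eventually.of_forall fun _ => dist_nonneg))

lemma infDist_le_limsup_dist {z : X} {Λ : Set X} (hz : MapClusterPt z l u)
    (hv : ∀ᶠ a in l, v a ∈ Λ) (hb : IsBoundedUnder (· ≤ ·) l fun a => dist (u a) (v a)) :
    infDist z Λ ≤ limsup (fun a => dist (u a) (v a)) l := by
  refine le_of_forall_pos_le_add fun δ hδ => ?_
  have hfreq : ∃ᶠ a in l, infDist z Λ - δ ≤ dist (u a) (v a) := by
    refine ((hz.frequently (ball_mem_nhds z hδ)).and_eventually hv).mono fun a ⟨hua, hva⟩ => ?_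
    linarith [infDist_le_infDist_add_dist (x := z) (y := u a) (s := Λ),
      infDist_le_dist_of_mem (x := u a) hva, dist_comm z (u a), mem_ball.1 hua]
  linarith [le_limsup_of_frequently_le hfreq hb]

theorem oscillation_of_proximal [l.NeBot] {C Λ : Set X} (hC : IsCompact C) (hΛC : Λ ⊆ C)
    (hΛ : IsClosed Λ) {z₀ : X} (hz₀C : z₀ ∈ C) (hz₀Λ : z₀ ∉ Λ) (hu : ∀ᶠ a in l, u a ∈ C)
    (hv : ∀ᶠ a in l, v a ∈ Λ) (hω : ∀ z ∈ C, MapClusterPt z l u) {y : X} (hy : y ∈ Λ)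
    (hprox : MapClusterPt (y, y) l fun a => (u a, v a)) :
    liminf (fun a => dist (u a) (v a)) l = 0 ∧ 0 < limsup (fun a => dist (u a) (v a)) l ∧
      liminf (fun a => dist (u a) y) l = 0 ∧ diam C / 2 ≤ limsup (fun a => dist (u a) y) l := by
  have huv := isBoundedUnder_dist_of_eventually_mem hC.isBounded hu (hv.mono fun _ h => hΛC h)
  have huy := isBoundedUnder_dist_of_eventually_mem hC.isBounded hu (v := fun _ => y)
    (Eventually.of_forall fun _ => hΛC hy)
  have hfar : ∀ w ∈ C, dist w y ≤ limsup (fun a => dist (u a) y) l := fun w hw =>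
    ((hω w hw).continuousAt_comp (f := (dist · y))
      (continuous_id.dist continuous_const).continuousAt).le_limsup huy
  refine ⟨liminf_dist_eq_zero_of_mapClusterPt huv hprox, ?_,
    liminf_dist_eq_zero_of_mapClusterPt (y := y) huy ?_, ?_⟩
  · exact ((hΛ.notMem_iff_infDist_pos ⟨y, hy⟩).1 hz₀Λ).trans_le
      (infDist_le_limsup_dist (hω z₀ hz₀C) hv huv)
  · exact (hω y (hΛC hy)).continuousAt_comp (f := (·, y))
      (by fun_prop : Continuous fun w : X => (w, y)).continuousAt
  · have hL : 0 ≤ limsup (fun a => dist (u a) y) l := dist_self y ▸ hfar y (hΛC hy)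
    have hdiam : diam C ≤ 2 * limsup (fun a => dist (u a) y) l :=
      diam_le_of_forall_dist_le (by positivity) fun a ha b hb => by
        linarith [dist_triangle_right a b y, hfar a ha, hfar b hb]
    linarith

end Oscillation

theorem generic_chaotic_general {X : Type*} [MetricSpace X]
    [TopologicalSpace.SeparableSpace X]
    (f : ℝ → X → X) (hf : IsSemiflow f) (p : X)
    (horb : IsCompact (closure {y : X | ∃ t : ℝ, 0 ≤ t ∧ f t p = y}))
    (C : Set X) (hC : IsMCA f p C)
    (hgen : ∃ q ∈ C, IsMCA f q C) (hnm : ¬ IsMinimalSet f C) :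
    ∃ S : Set C, S ∈ residual C ∧
      ∀ x ∈ S, ∀ Λ ⊆ C, IsMinimalSet f Λ →
        ∃ y ∈ Λ,
          Filter.liminf (fun t : ℝ => dist (f t (x : X)) (f t y)) Filter.atTop = 0 ∧
          0 < Filter.limsup (fun t : ℝ => dist (f t (x : X)) (f t y)) Filter.atTop ∧
          Filter.liminf (fun t : ℝ => dist (f t (x : X)) y) Filter.atTop = 0 ∧
          Metric.diam C / 2 ≤
            Filter.limsup (fun t : ℝ => dist (f t (x : X)) y) Filter.atTop := by
  obtain ⟨q, hqC, hq⟩ := hgen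
  have hCcpt : IsCompact C := hC.isCompact hf horb
  have hCinv : FlowInvariant f C := hC.flowInvariant hf horb
  have hqorb : IsCompact (closure ((fun t => f t q) '' Ici 0)) :=
    hCcpt.of_isClosed_subset isClosed_closure (closure_motion_subset hCinv hC.1.1 hqC)
  have : CompactSpace C := isCompact_iff_compactSpace.1 hCcpt
  refine ⟨{x | ∀ z, MapClusterPt z atTop fun t => semiflowOn f hCinv t x},
    residual_forall_mapClusterPt (continuous_semiflowOn hf hCinv) (semiflowOn_add hf hCinv)
      (q := ⟨q, hqC⟩) fun z => (mapClusterPt_semiflowOn_iff hCinv).2 (hq.mapClusterPt hf hqorb z.2),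
    fun x hx Λ hΛC hΛ => ?_⟩
  obtain ⟨z₀, hz₀C, hz₀Λ⟩ := exists_of_ssubset (hΛC.ssubset_of_ne fun h => hnm (h ▸ hΛ))
  obtain ⟨⟨l, hl⟩, hΛcl, hΛinv, -⟩ := hΛ
  obtain ⟨y, hyΛ, hxy⟩ :=
    exists_proximal_semiflowOn hf hCinv hΛcl hΛinv (l := ⟨l, hΛC hl⟩) hl (hx _)
  exact ⟨y, hyΛ, oscillation_of_proximal hCcpt hΛC hΛcl hz₀C hz₀Λ
    ((eventually_ge_atTop 0).mono fun t ht => hCinv t ht x x.2)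
    ((eventually_ge_atTop 0).mono fun t ht => hΛinv t ht y hyΛ)
    (fun z hz => (mapClusterPt_semiflowOn_iff hCinv (z := ⟨z, hz⟩)).1 (hx _)) hyΛ hxy⟩

theorem generic_chaotic {X : Type*} [MetricSpace X]
    [TopologicalSpace.SeparableSpace X] [CompleteSpace X]
    (f : ℝ → X → X) (hf : IsSemiflow f) (p : X)
    (horb : IsCompact (closure {y : X | ∃ t : ℝ, 0 ≤ t ∧ f t p = y}))
    (C : Set X) (hC : IsMCA f p C)
    (hgen : ∃ q ∈ C, IsMCA f q C) (hnm : ¬ IsMinimalSet f C) :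
    ∃ S : Set C, S ∈ residual C ∧
      ∀ x ∈ S, ∀ Λ ⊆ C, IsMinimalSet f Λ →
        ∃ y ∈ Λ,
          Filter.liminf (fun t : ℝ => dist (f t (x : X)) (f t y)) Filter.atTop = 0 ∧
          0 < Filter.limsup (fun t : ℝ => dist (f t (x : X)) (f t y)) Filter.atTop ∧
          Filter.liminf (fun t : ℝ => dist (f t (x : X)) y) Filter.atTop = 0 ∧
          Metric.diam C / 2 ≤
            Filter.limsup (fun t : ℝ => dist (f t (x : X)) y) Filter.atTop :=
  generic_chaotic_general f hf p horb C hC hgen hnm
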